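/- arXiv:1104.0627 — 4 statements merged into one kernel-verified Lean document; each statement's English description precedes it below -/
import Mathlib

section
/- Let A be an Artin algebra and X a finitely generated right A-module which is Ext-projective in gen(X), and set a = ann_A(X). Then there exists a short exact sequence 0 → A/a → X⁰ → X¹ → 0 of right A/a-modules such that X⁰ is a direct summand of X^(d) for some d ≥ 0, X¹ admits a surjective homomorphism from X^(n) for some n ≥ 0, and Ext¹_{A/a}(X¹, N) = 0 for every right A/a-module N admitting a surjective homomorphism from some X^(m). -/
open CategoryTheory

section Prelim

variable (A : Type) [Ring A]

/-- `M` lies in `gen(X)`: some finite direct sum of copies of `X` surjects onto `M`. -/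
def IsGenBy (X M : Type) [AddCommGroup X] [Module A X] [AddCommGroup M] [Module A M] : Prop :=
  ∃ (n : ℕ) (f : (Fin n → X) →ₗ[A] M), Function.Surjective f

/-- `M` lies in `cog(Y)`: `M` embeds into some finite direct sum of copies of `Y`. -/
def IsCogBy (Y M : Type) [AddCommGroup Y] [Module A Y] [AddCommGroup M] [Module A M] : Prop :=
  ∃ (n : ℕ) (f : M →ₗ[A] (Fin n → Y)), Function.Injective f

/-- `M` is a direct summand of a finite direct sum of copies of `X`. -/
def IsDirectSummandOf (X M : Type) [AddCommGroup X] [Module A X] [AddCommGroup M]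
    [Module A M] : Prop :=
  ∃ (n : ℕ) (i : M →ₗ[A] (Fin n → X)) (r : (Fin n → X) →ₗ[A] M), r ∘ₗ i = LinearMap.id

/-- `Ext¹_A(M, N)`. -/
noncomputable abbrev ext1 (M N : Type) [AddCommGroup M] [Module A M]
    [AddCommGroup N] [Module A N] : ModuleCat ℤ :=
  ((Ext ℤ (ModuleCat A) 1).obj (Opposite.op (ModuleCat.of A M))).obj (ModuleCat.of A N)

/-- The ring congruence on `A` identifying `a` and `b` iff `a - b` annihilates `X`. -/
def annRingCon (X : Type) [AddCommGroup X] [Module A X] : RingCon A where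
  r a b := ∀ x : X, a • x = b • x
  iseqv := ⟨fun _ _ => rfl, fun h x => (h x).symm, fun h1 h2 x => (h1 x).trans (h2 x)⟩
  mul' := @fun a b c d h1 h2 x => by
    show (a * c) • x = (b * d) • x
    rw [mul_smul, mul_smul, h2, h1]
  add' := @fun a b c d h1 h2 x => by
    show (a + c) • x = (b + d) • x
    rw [add_smul, add_smul, h1 x, h2 x]

/-- The factor algebra `A/ann_A(X)`. -/
abbrev AnnQuot (X : Type) [AddCommGroup X] [Module A X] : Type := (annRingCon A X).Quotient

instance (X : Type) [AddCommGroup X] [Module A X] : SMul (AnnQuot A X) X :=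
  ⟨fun c x => Quotient.liftOn' c (fun a => a • x) (fun _ _ h => h x)⟩

/-- `X` is a module over `A/ann_A(X)`. -/
instance (X : Type) [AddCommGroup X] [Module A X] : Module (AnnQuot A X) X where
  one_smul x := one_smul A x
  mul_smul c d x := Quotient.inductionOn₂' c d fun a b => mul_smul a b x
  smul_zero c := Quotient.inductionOn' c fun a => smul_zero a
  smul_add c x y := Quotient.inductionOn' c fun a => smul_add a x y
  add_smul c d x := Quotient.inductionOn₂' c d fun a b => add_smul a b x
  zero_smul x := zero_smul A x

end Prelim

/-!
Write `B = A/ann_A(X)`. As `A` is finite over the central ring `R`, `X` is generated over `R` by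
some `y : Fin d → X`, and `b ↦ b • y` embeds `B` into `X^d` because `X` is a faithful `B`-module;
take `X¹ = X^d ⧸ B ∙ y`. Vanishing of `Ext¹` is equivalent to the splitting of all extensions,
which passes from `A` to its quotient `B` and from `X` to `X^d`. Given an extension `E` of `X¹` by
`N ∈ gen X`, lift `X^d → X¹` to `u : X^d → E`; then `u y` lies in `N`. Since `R`-linear
combinations of coordinates are `B`-linear maps `X^d → X`, every element of `N` is `g y` for some
`g : X^d → N`, and subtracting such a `g` from `u` yields a map vanishing on `B ∙ y`, hence a
section of `E → X¹`.
-/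

namespace Function.Exact

variable {B M N P Q : Type*} [Ring B] [AddCommGroup M] [Module B M] [AddCommGroup N]
  [Module B N] [AddCommGroup P] [Module B P] [AddCommGroup Q] [Module B Q]
  {f : M →ₗ[B] N} {g : N →ₗ[B] P}

theorem exists_comp_eq_of_surjective (h : Function.Exact f g) (hg : Function.Surjective g)
    {σ : N →ₗ[B] Q} (hσ : σ ∘ₗ f = 0) : ∃ s : P →ₗ[B] Q, s ∘ₗ g = σ := by
  refine ⟨(LinearMap.range f).liftQ σ ?_ ∘ₗ (h.linearEquivOfSurjective hg).symm.toLinearMap, ?_⟩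
  · rintro _ ⟨x, rfl⟩
    exact LinearMap.congr_fun hσ x
  · ext x
    simp

theorem exists_comp_eq_of_injective (h : Function.Exact f g) (hf : Function.Injective f)
    {τ : Q →ₗ[B] N} (hτ : g ∘ₗ τ = 0) : ∃ φ : Q →ₗ[B] M, f ∘ₗ φ = τ := by
  have hτf : ∀ q, τ q ∈ LinearMap.range f := fun q => (h _).1 (LinearMap.congr_fun hτ q)
  refine ⟨(LinearEquiv.ofInjective f hf).symm.toLinearMap ∘ₗ τ.codRestrict _ hτf, ?_⟩
  ext q
  exact congrArg Subtype.val ((LinearEquiv.ofInjective f hf).apply_symm_apply ⟨τ q, hτf q⟩)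

end Function.Exact

def ExtensionsSplit (B M N : Type) [Ring B] [AddCommGroup M] [Module B M] [AddCommGroup N]
    [Module B N] : Prop :=
  ∀ (E : Type) [AddCommGroup E] [Module B E] (i : N →ₗ[B] E) (p : E →ₗ[B] M),
    Function.Injective i → Function.Exact i p → Function.Surjective p →
      ∃ s : M →ₗ[B] E, p ∘ₗ s = LinearMap.id

section Presentation

variable {B P₂ P₁ P₀ M N : Type} [Ring B] [AddCommGroup P₂] [Module B P₂] [AddCommGroup P₁]
  [Module B P₁] [AddCommGroup P₀] [Module B P₀] [AddCommGroup M] [Module B M] [AddCommGroup N]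
  [Module B N] {d₂ : P₂ →ₗ[B] P₁} {d₁ : P₁ →ₗ[B] P₀} {π : P₀ →ₗ[B] M}

/-- `(P₀ × N) ⧸ {(d₁ y, -φ y)}` is the pushout of `d₁` along `φ`, an extension of `M` by `N`;
a retraction of it, restricted to `P₀`, extends `φ`. -/
theorem ExtensionsSplit.exists_comp_eq (h : ExtensionsSplit B M N)
    (h₁ : Function.Exact d₂ d₁)
    (h₀ : Function.Exact d₁ π) (hπ : Function.Surjective π) {φ : P₁ →ₗ[B] N}
    (hφ : φ ∘ₗ d₂ = 0) : ∃ ψ : P₀ →ₗ[B] N, ψ ∘ₗ d₁ = φ := by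
  let W := LinearMap.range (d₁.prod (-φ))
  let i : N →ₗ[B] (P₀ × N) ⧸ W := W.mkQ ∘ₗ LinearMap.inr B P₀ N
  let p : (P₀ × N) ⧸ W →ₗ[B] M := W.liftQ (π ∘ₗ LinearMap.fst B P₀ N) <| by
    rintro _ ⟨x, rfl⟩
    exact h₀.apply_apply_eq_zero x
  have hW : ∀ x n, (x, n) ∈ W ↔ ∃ y, d₁ y = x ∧ -φ y = n := by
    simp [W, Prod.ext_iff]
  have hi : Function.Injective i := by
    refine (injective_iff_map_eq_zero i).2 fun n hn => ?_
    obtain ⟨y, hy, rfl⟩ := (hW 0 n).1 ((Submodule.Quotient.mk_eq_zero W).1 hn)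
    obtain ⟨z, rfl⟩ := (h₁ y).1 hy
    simpa using LinearMap.congr_fun hφ z
  have hp : Function.Surjective p := by
    intro m
    obtain ⟨x, rfl⟩ := hπ m
    exact ⟨W.mkQ (x, 0), rfl⟩
  have hip : Function.Exact i p := by
    refine Function.Exact.of_comp_of_mem_range (funext fun n => by simp [i, p]) ?_
    intro e he
    obtain ⟨⟨x, n⟩, rfl⟩ := W.mkQ_surjective e
    obtain ⟨y, rfl⟩ := (h₀ x).1 he
    refine ⟨n + φ y, (Submodule.Quotient.eq W).2 ((hW _ _).2 ⟨-y, ?_⟩)⟩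
    simp
  obtain ⟨r, hr⟩ := ((hip.split_tfae hi hp).out 0 1).1 (h _ i p hi hip hp)
  refine ⟨r ∘ₗ W.mkQ ∘ₗ LinearMap.inl B P₀ N, LinearMap.ext fun y => ?_⟩
  have hy : W.mkQ (d₁ y, 0) = i (φ y) := (Submodule.Quotient.eq W).2 ((hW _ _).2 ⟨y, by simp⟩)
  simpa using (congrArg r hy).trans (LinearMap.congr_fun hr (φ y))

theorem extensionsSplit_of_forall_exists_comp_eq [Module.Projective B P₀]
    (h₁ : d₁ ∘ₗ d₂ = 0) (h₀ : Function.Exact d₁ π) (hπ : Function.Surjective π)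
    (H : ∀ φ : P₁ →ₗ[B] N, φ ∘ₗ d₂ = 0 → ∃ ψ : P₀ →ₗ[B] N, ψ ∘ₗ d₁ = φ) :
    ExtensionsSplit B M N := by
  intro E _ _ i p hi hip hp
  obtain ⟨τ, hτ⟩ := Module.projective_lifting_property p π hp
  obtain ⟨φ, hφ⟩ := hip.exists_comp_eq_of_injective hi (τ := τ ∘ₗ d₁) <| by
    rw [← LinearMap.comp_assoc, hτ, h₀.linearMap_comp_eq_zero]
  obtain ⟨ψ, hψ⟩ := H φ <| by
    refine LinearMap.ext fun z => hi ?_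
    have hφz := LinearMap.congr_fun hφ (d₂ z)
    have hdz := LinearMap.congr_fun h₁ z
    simp only [LinearMap.comp_apply, LinearMap.zero_apply] at hφz hdz ⊢
    rw [hφz, hdz, map_zero, map_zero]
  obtain ⟨s, hs⟩ := h₀.exists_comp_eq_of_surjective hπ (σ := τ - i ∘ₗ ψ) <| by
    rw [LinearMap.sub_comp, LinearMap.comp_assoc, hψ, hφ, sub_self]
  refine ⟨s, LinearMap.ext fun m => ?_⟩
  obtain ⟨x, rfl⟩ := hπ m
  have hsx := LinearMap.congr_fun hs x
  simp only [LinearMap.comp_apply, LinearMap.sub_apply] at hsx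
  simp [hsx, hip.apply_apply_eq_zero, ← LinearMap.comp_apply p τ, hτ]

end Presentation

section Ext

variable {B M N : Type} [Ring B] [AddCommGroup M] [Module B M] [AddCommGroup N] [Module B N]

theorem subsingleton_ext1_iff_forall_exists_comp_eq
    (P : ProjectiveResolution (ModuleCat.of B M)) :
    Subsingleton (ext1 B M N) ↔ ∀ φ : P.complex.X 1 →ₗ[B] N, φ ∘ₗ (P.complex.d 2 1).hom = 0 →
      ∃ ψ : P.complex.X 0 →ₗ[B] N, ψ ∘ₗ (P.complex.d 1 0).hom = φ := by
  rw [← ModuleCat.isZero_iff_subsingleton, Iso.isZero_iff (P.isoExt 1 (ModuleCat.of B N)),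
    ← HomologicalComplex.exactAt_iff_isZero_homology,
    HomologicalComplex.exactAt_iff' _ 0 1 2 (by simp) (by simp),
    ShortComplex.moduleCat_exact_iff]
  change (∀ φ : P.complex.X 1 ⟶ ModuleCat.of B N, P.complex.d 2 1 ≫ φ = 0 →
    ∃ ψ : P.complex.X 0 ⟶ ModuleCat.of B N, P.complex.d 1 0 ≫ ψ = φ) ↔ _
  refine ⟨fun H φ hφ => ?_, fun H φ hφ => ?_⟩
  · obtain ⟨ψ, hψ⟩ := H (ModuleCat.ofHom φ) (ModuleCat.hom_ext hφ)
    exact ⟨ψ.hom, congrArg ModuleCat.Hom.hom hψ⟩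
  · obtain ⟨ψ, hψ⟩ := H φ.hom (congrArg ModuleCat.Hom.hom hφ)
    exact ⟨ModuleCat.ofHom ψ, ModuleCat.hom_ext hψ⟩

theorem subsingleton_ext1_iff_extensionsSplit :
    Subsingleton (ext1 B M N) ↔ ExtensionsSplit B M N := by
  obtain ⟨P⟩ := HasProjectiveResolution.out (Z := ModuleCat.of B M)
  have h₁ : Function.Exact (P.complex.d 2 1).hom (P.complex.d 1 0).hom :=
    (ShortComplex.ShortExact.moduleCat_exact_iff_function_exact _).1 (P.exact_succ 0)
  have h₀ : Function.Exact (P.complex.d 1 0).hom (P.π.f 0).hom :=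
    (ShortComplex.ShortExact.moduleCat_exact_iff_function_exact _).1 P.exact₀
  have hπ : Function.Surjective (P.π.f 0).hom := (ModuleCat.epi_iff_surjective _).1 inferInstance
  rw [subsingleton_ext1_iff_forall_exists_comp_eq P]
  exact ⟨extensionsSplit_of_forall_exists_comp_eq h₁.linearMap_comp_eq_zero h₀ hπ,
    fun h _ => h.exists_comp_eq h₁ h₀ hπ⟩

end Ext

section Extensions

variable {B M N : Type} [Ring B] [AddCommGroup M] [Module B M] [AddCommGroup N] [Module B N]

/-- Splitting the pullback of the extension along `g`. -/
theorem ExtensionsSplit.exists_comp_eq_of_extension {M' : Type} [AddCommGroup M'] [Module B M']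
    (h : ExtensionsSplit B M' N) {E : Type} [AddCommGroup E] [Module B E] {i : N →ₗ[B] E}
    {p : E →ₗ[B] M} (hi : Function.Injective i) (hip : Function.Exact i p)
    (hp : Function.Surjective p) (g : M' →ₗ[B] M) : ∃ t : M' →ₗ[B] E, p ∘ₗ t = g := by
  let F := LinearMap.ker (p ∘ₗ LinearMap.fst B E M' - g ∘ₗ LinearMap.snd B E M')
  have hF : ∀ e m, (e, m) ∈ F ↔ p e = g m := fun e m => by simp [F, sub_eq_zero]
  let iF : N →ₗ[B] F := (LinearMap.inl B E M' ∘ₗ i).codRestrict F fun n => by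
    simp [hF, hip.apply_apply_eq_zero]
  let pF : F →ₗ[B] M' := LinearMap.snd B E M' ∘ₗ F.subtype
  have hiF : Function.Injective iF := fun n n' hnn' => hi congr(($hnn' : E × M').1)
  have hpF : Function.Surjective pF := fun m => by
    obtain ⟨e, he⟩ := hp (g m)
    exact ⟨⟨(e, m), (hF e m).2 he⟩, rfl⟩
  have hipF : Function.Exact iF pF := by
    rintro ⟨⟨e, m⟩, hem⟩
    refine ⟨fun hm => ?_, ?_⟩
    · obtain rfl : m = 0 := hm
      obtain ⟨n, rfl⟩ := (hip e).1 (by simpa using (hF e 0).1 hem)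
      exact ⟨n, rfl⟩
    · rintro ⟨n, hn⟩
      rw [← hn]
      rfl
  obtain ⟨t, ht⟩ := h F iF pF hiF hipF hpF
  refine ⟨LinearMap.fst B E M' ∘ₗ F.subtype ∘ₗ t, LinearMap.ext fun m => ?_⟩
  have hm := (hF _ _).1 (t m).2
  rwa [show ((t m : E × M')).2 = m from LinearMap.congr_fun ht m] at hm

theorem ExtensionsSplit.pi (h : ExtensionsSplit B M N) (ι : Type) [Fintype ι]
    [DecidableEq ι] :
    ExtensionsSplit B (ι → M) N := by
  intro E _ _ i p hi hip hp
  choose t ht using fun k =>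
    h.exists_comp_eq_of_extension hi hip hp (LinearMap.single B (fun _ : ι => M) k)
  have hpt : ∀ k m, p (t k m) = Pi.single k m := fun k => LinearMap.congr_fun (ht k)
  exact ⟨∑ k, t k ∘ₗ LinearMap.proj k,
    LinearMap.ext fun v => by simp [hpt, Finset.univ_sum_single]⟩


theorem ExtensionsSplit.quotient_span_singleton (h : ExtensionsSplit B M N) (v : M)
    (hv : ∀ n : N, ∃ g : M →ₗ[B] N, g v = n) : ExtensionsSplit B (M ⧸ B ∙ v) N := by
  intro E _ _ i p hi hip hp
  obtain ⟨u, hu⟩ := h.exists_comp_eq_of_extension hi hip hp (B ∙ v).mkQ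
  have hpu : ∀ m, p (u m) = (B ∙ v).mkQ m := LinearMap.congr_fun hu
  obtain ⟨n, hn⟩ := (hip (u v)).1 (by simp [hpu])
  obtain ⟨g, rfl⟩ := hv n
  have hker : B ∙ v ≤ LinearMap.ker (u - i ∘ₗ g) := by
    simp [Submodule.span_singleton_le_iff_mem, hn]
  refine ⟨(B ∙ v).liftQ _ hker, (B ∙ v).linearMap_qext (LinearMap.ext fun m => ?_)⟩
  simp [hpu, hip.apply_apply_eq_zero]

end Extensions

section ChangeOfRings

variable {A B M N : Type} [Ring A] [Ring B] (ρ : A →+* B) [AddCommGroup M] [Module A M]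
  [Module B M] [AddCommGroup N] [Module A N] [Module B N]

def LinearMap.restrictScalarsAlong (hM : ∀ (a : A) (m : M), ρ a • m = a • m)
    (hN : ∀ (a : A) (n : N), ρ a • n = a • n) (f : M →ₗ[B] N) : M →ₗ[A] N where
  toFun := f
  map_add' := f.map_add
  map_smul' a m := by rw [← hM, f.map_smul, hN]; rfl

theorem ExtensionsSplit.of_ringHom_surjective (hρ : Function.Surjective ρ)
    (hM : ∀ (a : A) (m : M), ρ a • m = a • m) (hN : ∀ (a : A) (n : N), ρ a • n = a • n)
    (h : ExtensionsSplit A M N) : ExtensionsSplit B M N := by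
  intro E _ _ i p hi hip hp
  let _ : Module A E := Module.compHom E ρ
  obtain ⟨s, hs⟩ := h E (i.restrictScalarsAlong ρ hN fun _ _ => rfl)
    (p.restrictScalarsAlong ρ (fun _ _ => rfl) hM) hi hip hp
  refine ⟨{ s with map_smul' := fun b m => ?_ },
    LinearMap.ext fun m => LinearMap.congr_fun hs m⟩
  obtain ⟨a, rfl⟩ := hρ b
  rw [hM]
  exact s.map_smul a m

theorem IsGenBy.of_ringHom {X : Type} [AddCommGroup X] [Module A X] [Module B X]
    (hX : ∀ (a : A) (x : X), ρ a • x = a • x) (hN : ∀ (a : A) (n : N), ρ a • n = a • n)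
    (h : IsGenBy B X N) : IsGenBy A X N := by
  obtain ⟨n, q, hq⟩ := h
  exact ⟨n, q.restrictScalarsAlong ρ (fun a v => funext fun i => hX a (v i)) hN, hq⟩

end ChangeOfRings

instance (A X : Type) [Ring A] [AddCommGroup X] [Module A X] :
    FaithfulSMul (AnnQuot A X) X where
  eq_of_smul_eq_smul {b₁ b₂} h := by
    induction b₁, b₂ using Quotient.inductionOn₂' with
    | h a₁ a₂ => exact Quotient.sound' h

section Span

variable {R B X ι : Type} [Semiring R] [Ring B] [AddCommGroup X] [Module B X] [Module R X]
  [SMulCommClass B R X] {y : ι → X}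

theorem toSpanSingleton_injective_of_span_eq_top [FaithfulSMul B X]
    (hy : Submodule.span R (Set.range y) = ⊤) :
    Function.Injective (LinearMap.toSpanSingleton B (ι → X) y) := by
  refine (injective_iff_map_eq_zero _).2 fun b hb => ?_
  have hker :
      Submodule.span R (Set.range y) ≤ LinearMap.ker (DistribSMul.toLinearMap R X b) := by
    rw [Submodule.span_le]
    rintro _ ⟨i, rfl⟩
    exact congr_fun hb i
  refine FaithfulSMul.eq_of_smul_eq_smul (α := X) fun x => ?_
  simpa using hker (hy ▸ Submodule.mem_top : x ∈ Submodule.span R (Set.range y))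

theorem exists_linearMap_apply_eq_of_span_eq_top [Fintype ι]
    (hy : Submodule.span R (Set.range y) = ⊤) {N : Type} [AddCommGroup N] [Module B N]
    (hN : IsGenBy B X N) (n : N) : ∃ g : (ι → X) →ₗ[B] N, g y = n := by
  obtain ⟨m, q, hq⟩ := hN
  obtain ⟨z, rfl⟩ := hq n
  choose c hc using fun j =>
    (Submodule.mem_span_range_iff_exists_fun R).1 (hy ▸ Submodule.mem_top (x := z j))
  exact ⟨q ∘ₗ LinearMap.pi fun j => ∑ i, c j i • LinearMap.proj i,
    congrArg q (funext fun j => by simp [hc])⟩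

end Span

theorem stmt2_general
    (R : Type) [CommRing R]
    (A : Type) [Ring A] [Algebra R A] [Module.Finite R A]
    (X : Type) [AddCommGroup X] [Module A X] [Module.Finite A X]
    (hX : ∀ (N : Type) [AddCommGroup N] [Module A N], IsGenBy A X N →
      Subsingleton (ext1 A X N)) :
    ∃ (X0 X1 : ModuleCat (AnnQuot A X)) (f : AnnQuot A X →ₗ[AnnQuot A X] X0)
      (g : X0 →ₗ[AnnQuot A X] X1),
      Function.Injective f ∧ Function.Exact f g ∧ Function.Surjective g ∧
      IsDirectSummandOf (AnnQuot A X) X X0 ∧ IsGenBy (AnnQuot A X) X X1 ∧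
      ∀ (N : Type) [AddCommGroup N] [Module (AnnQuot A X) N],
        IsGenBy (AnnQuot A X) X N → Subsingleton (ext1 (AnnQuot A X) X1 N) := by
  let _ : Module R X := Module.compHom X (algebraMap R A)
  have : IsScalarTower R A X := ⟨fun r a x => by rw [Algebra.smul_def, mul_smul]; rfl⟩
  have : Module.Finite R X := Module.Finite.trans A X
  have : SMulCommClass (AnnQuot A X) R X := ⟨fun b r x => by
    induction b using Quotient.inductionOn' with
    | h a =>
      show a • algebraMap R A r • x = algebraMap R A r • a • x
      rw [← mul_smul, ← mul_smul, Algebra.commutes]⟩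
  obtain ⟨d, y, hy⟩ := Module.Finite.exists_fin (R := R) (M := X)
  let f := LinearMap.toSpanSingleton (AnnQuot A X) (Fin d → X) y
  refine ⟨.of _ (Fin d → X), .of _ (_ ⧸ LinearMap.range f), f, (LinearMap.range f).mkQ,
    toSpanSingleton_injective_of_span_eq_top hy, LinearMap.exact_map_mkQ_range f,
    Submodule.mkQ_surjective _, ⟨d, LinearMap.id, LinearMap.id, rfl⟩,
    ⟨d, _, Submodule.mkQ_surjective _⟩, fun N _ _ hN => ?_⟩
  let ρ := (annRingCon A X).mk'
  let _ : Module A N := Module.compHom N ρ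
  have hXN : ExtensionsSplit (AnnQuot A X) X N :=
    (subsingleton_ext1_iff_extensionsSplit.1 (hX N (hN.of_ringHom ρ (fun _ _ => rfl)
      fun _ _ => rfl))).of_ringHom_surjective ρ (annRingCon A X).mk'_surjective
      (fun _ _ => rfl) fun _ _ => rfl
  rw [LinearMap.range_toSpanSingleton]
  exact subsingleton_ext1_iff_extensionsSplit.2 ((hXN.pi (Fin d)).quotient_span_singleton y
    (exists_linearMap_apply_eq_of_span_eq_top hy hN))

/-- If `X` is a finitely generated module over an Artin algebra `A` which is
Ext-projective in `gen(X)`, then over `A/ann_A(X)` there is a short exact sequence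
`0 → A/a → X⁰ → X¹ → 0` with `X⁰ ∈ add X` and `X¹ ∈ gen X` Ext-projective in `gen X`. -/
theorem stmt2
    (R : Type) [CommRing R] [IsArtinianRing R] [IsLocalRing R]
    (A : Type) [Ring A] [Algebra R A] [Module.Finite R A]
    (X : Type) [AddCommGroup X] [Module A X] [Module.Finite A X]
    (hX : ∀ (N : Type) [AddCommGroup N] [Module A N], IsGenBy A X N →
      Subsingleton (ext1 A X N)) :
    ∃ (X0 X1 : ModuleCat (AnnQuot A X)) (f : AnnQuot A X →ₗ[AnnQuot A X] X0)
      (g : X0 →ₗ[AnnQuot A X] X1),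
      Function.Injective f ∧ Function.Exact f g ∧ Function.Surjective g ∧
      IsDirectSummandOf (AnnQuot A X) X X0 ∧ IsGenBy (AnnQuot A X) X X1 ∧
      ∀ (N : Type) [AddCommGroup N] [Module (AnnQuot A X) N],
        IsGenBy (AnnQuot A X) X N → Subsingleton (ext1 (AnnQuot A X) X1 N) :=
  stmt2_general R A X hX
end

section
/- Let A be an Artin algebra and Y a finitely generated right A-module which is Ext-injective in cog(Y), and set a' = ann_A(Y). Then Y has injective dimension at most 1 as a right A/a'-module; that is, there exists a short exact sequence 0 → Y → I⁰ → I¹ → 0 of right A/a'-modules in which I⁰ and I¹ are injective A/a'-modules. -/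
open CategoryTheory

/-!
Write `B = A/ann_A(Y)` and embed `Y` into an injective `B`-module `I`. By Baer's criterion,
`C = I/Y` is injective as soon as every map `L → C` from a right ideal `L` of `B` lifts along
`I → C`. Since `Y` is faithful over `B` and finitely generated over the central subring `R`,
the ring `B` embeds into some `Yⁿ`; hence `L ∈ cog(Y)` as an `A`-module and `Ext¹_A(L, Y) = 0`.
This group receives the obstruction to lifting `L → C` along the epimorphism `I → C` with
kernel `Y`, so an `A`-linear lift exists, and it is `B`-linear because `A → B` is surjective.
-/

universe u v w w'

namespace CategoryTheory

open Limits

variable {C : Type u} [Category.{v} C] [Abelian C] [EnoughProjectives C]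

lemma ProjectiveResolution.exists_d_comp_eq_of_isZero_ext {X Y : C} (P : ProjectiveResolution X)
    (h : IsZero (((Ext ℤ C 1).obj (Opposite.op X)).obj Y)) (v : P.complex.X 1 ⟶ Y)
    (hv : P.complex.d 2 1 ≫ v = 0) : ∃ w : P.complex.X 0 ⟶ Y, P.complex.d 1 0 ≫ w = v := by
  have hexact : (P.complex.linearYonedaObj ℤ Y).ExactAt 1 :=
    (HomologicalComplex.exactAt_iff_isZero_homology _ _).mpr (h.of_iso (P.isoExt 1 Y).symm)
  rw [HomologicalComplex.exactAt_iff' _ 0 1 2 (by simp) (by simp),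
    ShortComplex.moduleCat_exact_iff] at hexact
  exact hexact v hv

lemma ShortComplex.ShortExact.exists_comp_g_eq_of_isZero_ext {S : ShortComplex C}
    (hS : S.ShortExact) {X : C} (h : IsZero (((Ext ℤ C 1).obj (Opposite.op X)).obj S.X₁))
    (φ : X ⟶ S.X₃) : ∃ ψ : X ⟶ S.X₂, ψ ≫ S.g = φ := by
  have := hS.mono_f
  have := hS.epi_g
  let P := ProjectiveResolution.of X
  let ε : P.complex.X 0 ⟶ X := P.π.f 0
  have hε : P.complex.d 1 0 ≫ ε = 0 := P.complex_d_comp_π_f_zero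
  have : Epi ε := inferInstanceAs (Epi (P.π.f 0))
  let u : P.complex.X 0 ⟶ S.X₂ := Projective.factorThru (ε ≫ φ) S.g
  have hu : u ≫ S.g = ε ≫ φ := Projective.factorThru_comp _ _
  -- the restriction of `u` to the first syzygy lands in `S.X₁` and is a cocycle ...
  let v := hS.exact.lift (P.complex.d 1 0 ≫ u)
    (by rw [Category.assoc, hu, reassoc_of% hε, zero_comp])
  obtain ⟨w, hw⟩ := P.exists_d_comp_eq_of_isZero_ext h v (by
    rw [← cancel_mono S.f]; simp [v])
  -- ... hence a coboundary, and correcting `u` by it makes `u` vanish on the syzygy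
  let ψ : X ⟶ S.X₂ := P.exact₀.desc (u - w ≫ S.f) (by simp [reassoc_of% hw, v])
  refine ⟨ψ, (cancel_epi ε).1 ?_⟩
  have hψ : ε ≫ ψ = u - w ≫ S.f := P.exact₀.g_desc _ _
  rw [reassoc_of% hψ, Preadditive.sub_comp, hu, Category.assoc, S.zero, comp_zero, sub_zero]

end CategoryTheory

namespace ModuleCat

variable {A : Type u} {B : Type v} [Ring A] [Ring B] {ρ : A →+* B}

lemma restrictScalars_full_of_surjective (hρ : Function.Surjective ρ) :
    (restrictScalars.{w} ρ).Full where
  map_surjective {_ _} f := ⟨ofHom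
    { toFun := f
      map_add' := f.hom.map_add
      map_smul' := fun b m => by
        obtain ⟨a, rfl⟩ := hρ b
        exact f.hom.map_smul a m }, rfl⟩

end ModuleCat

namespace CategoryTheory.ShortComplex.ShortExact

open ModuleCat

variable {A : Type u} {B : Type v} [Ring A] [Ring B] {ρ : A →+* B}

lemma map_restrictScalars {S : ShortComplex (ModuleCat.{w} B)} (hS : S.ShortExact) :
    (S.map (restrictScalars ρ)).ShortExact :=
  shortComplex_shortExact _ ((moduleCat_exact_iff_function_exact S).mp hS.exact)
    hS.moduleCat_injective_f hS.moduleCat_surjective_g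

lemma exists_comp_g_eq_of_isZero_ext_restrictScalars [Small.{w} A] (hρ : Function.Surjective ρ)
    {S : ShortComplex (ModuleCat.{w} B)} (hS : S.ShortExact) {X : ModuleCat.{w} B}
    (h : Limits.IsZero (((Ext ℤ (ModuleCat.{w} A) 1).obj
      (Opposite.op ((restrictScalars ρ).obj X))).obj ((restrictScalars ρ).obj S.X₁)))
    (φ : X ⟶ S.X₃) : ∃ ψ : X ⟶ S.X₂, ψ ≫ S.g = φ := by
  have := restrictScalars_full_of_surjective.{u, v, w} hρ
  obtain ⟨ψ, hψ⟩ := hS.map_restrictScalars.exists_comp_g_eq_of_isZero_ext h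
    ((restrictScalars ρ).map φ)
  obtain ⟨ψ, rfl⟩ := (restrictScalars ρ).map_surjective ψ
  exact ⟨ψ, (restrictScalars ρ).map_injective (by rw [Functor.map_comp]; exact hψ)⟩

end CategoryTheory.ShortComplex.ShortExact

theorem Module.Baer.of_forall_exists_comp_eq {B : Type u} {I : Type v} {C : Type w} [Ring B]
    [Small.{v} B] [AddCommGroup I] [Module B I] [AddCommGroup C] [Module B C]
    [Module.Injective B I] (g : I →ₗ[B] C)
    (h : ∀ (L : Ideal B) (φ : L →ₗ[B] C), ∃ ψ : L →ₗ[B] I, g ∘ₗ ψ = φ) :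
    Module.Baer B C := by
  intro L φ
  obtain ⟨ψ, rfl⟩ := h L φ
  obtain ⟨Ψ, hΨ⟩ := Module.Baer.of_injective ‹_› L ψ
  exact ⟨g ∘ₗ Ψ, fun x hx => congrArg g (hΨ x hx)⟩

lemma exists_ulift_of_injective_of_exact {B : Type u} [Ring B] [Small.{0} B] {Y I C : Type}
    [AddCommGroup Y] [Module B Y] [AddCommGroup I] [Module B I] [AddCommGroup C] [Module B C]
    {f : Y →ₗ[B] I} {g : I →ₗ[B] C} (hI : Module.Injective B I) (hC : Module.Injective B C)
    (hf : Function.Injective f) (hfg : Function.Exact f g) (hg : Function.Surjective g) :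
    ∃ (I0 : ModuleCat.{w} B) (I1 : ModuleCat.{w'} B) (f : Y →ₗ[B] I0) (g : I0 →ₗ[B] I1),
      Module.Injective B I0 ∧ Module.Injective B I1 ∧
      Function.Injective f ∧ Function.Exact f g ∧ Function.Surjective g := by
  refine ⟨.of _ (ULift I), .of _ (ULift C), ULift.moduleEquiv.symm.toLinearMap ∘ₗ f,
    ULift.moduleEquiv.symm.toLinearMap ∘ₗ g ∘ₗ ULift.moduleEquiv.toLinearMap,
    Module.ulift_injective_of_injective _ hI, Module.ulift_injective_of_injective _ hC,
    ULift.moduleEquiv.symm.injective.comp hf, ?_,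
    ULift.moduleEquiv.symm.surjective.comp (hg.comp ULift.moduleEquiv.surjective)⟩
  rw [LinearEquiv.postcomp_exact_iff_exact]
  exact (LinearEquiv.conj_symm_exact_iff_exact f g _).mpr hfg

namespace AnnQuot

variable {A : Type} [Ring A] (Y : Type) [AddCommGroup Y] [Module A Y]

lemma eq_zero_of_forall_smul_eq_zero {b : AnnQuot A Y} (h : ∀ y : Y, b • y = 0) : b = 0 := by
  obtain ⟨a, rfl⟩ := RingCon.mk'_surjective _ b
  exact (RingCon.eq _).mpr fun y => (h y).trans (zero_smul A y).symm

lemma injective_pi_toSpanSingleton {R : Type*} [CommSemiring R] [Module R Y]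
    [SMulCommClass A R Y] {ι : Type*} {v : ι → Y} (hv : Submodule.span R (Set.range v) = ⊤) :
    Function.Injective
      (LinearMap.pi fun i => LinearMap.toSpanSingleton (AnnQuot A Y) Y (v i)) := by
  refine (injective_iff_map_eq_zero _).mpr fun b hb => eq_zero_of_forall_smul_eq_zero Y ?_
  obtain ⟨a, rfl⟩ := RingCon.mk'_surjective _ b
  have : DistribSMul.toLinearMap R Y a = 0 :=
    LinearMap.ext_on_range hv fun i => congrFun hb i
  exact LinearMap.congr_fun this

lemma exists_injective_pi (R : Type*) [CommRing R] [Algebra R A] [Module.Finite R A]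
    [Module.Finite A Y] :
    ∃ (n : ℕ) (ι : AnnQuot A Y →ₗ[AnnQuot A Y] (Fin n → Y)), Function.Injective ι := by
  let : Module R Y := Module.compHom Y (algebraMap R A)
  have : IsScalarTower R A Y := ⟨fun r a y => by
    change (r • a) • y = algebraMap R A r • a • y
    rw [Algebra.smul_def, mul_smul]⟩
  have : Module.Finite R Y := Module.Finite.trans A Y
  obtain ⟨n, v, hv⟩ := Module.Finite.exists_fin (R := R) (M := Y)
  exact ⟨n, _, injective_pi_toSpanSingleton Y hv⟩

lemma isCogBy_restrictScalars {M : Type} [AddCommGroup M] [Module (AnnQuot A Y) M] {n : ℕ}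
    {ι : M →ₗ[AnnQuot A Y] (Fin n → Y)} (hι : Function.Injective ι) :
    IsCogBy A Y ((ModuleCat.restrictScalars (annRingCon A Y).mk').obj (.of (AnnQuot A Y) M)) :=
  ⟨n, { toFun := ι
        map_add' := ι.map_add
        map_smul' := fun a => ι.map_smul (RingCon.mk' _ a) }, hι⟩

end AnnQuot

theorem stmt3_general
    (R : Type) [CommRing R]
    (A : Type) [Ring A] [Algebra R A] [Module.Finite R A]
    (Y : Type) [AddCommGroup Y] [Module A Y] [Module.Finite A Y]
    (hY : ∀ (M : Type) [AddCommGroup M] [Module A M], IsCogBy A Y M →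
      Subsingleton (ext1 A M Y)) :
    ∃ (I0 I1 : ModuleCat (AnnQuot A Y)) (f : Y →ₗ[AnnQuot A Y] I0)
      (g : I0 →ₗ[AnnQuot A Y] I1),
      Module.Injective (AnnQuot A Y) I0 ∧ Module.Injective (AnnQuot A Y) I1 ∧
      Function.Injective f ∧ Function.Exact f g ∧ Function.Surjective g := by
  obtain ⟨n, ι, hι⟩ := AnnQuot.exists_injective_pi (A := A) Y R
  let I := Injective.under (ModuleCat.of (AnnQuot A Y) Y)
  have hI : Module.Injective (AnnQuot A Y) I :=
    Module.injective_module_of_injective_object (inj := inferInstanceAs (Injective I)) _ _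
  let f := (Injective.ι (ModuleCat.of (AnnQuot A Y) Y)).hom
  have hf : Function.Injective f := (ModuleCat.mono_iff_injective _).mp inferInstance
  let g := (LinearMap.range f).mkQ
  have hfg : Function.Exact f g := LinearMap.exact_map_mkQ_range f
  have hg : Function.Surjective g := Submodule.mkQ_surjective _
  have hS := ModuleCat.shortComplex_shortExact
    (ModuleCat.shortComplexOfCompEqZero f g hfg.linearMap_comp_eq_zero) hfg hf hg
  have hC : Module.Injective (AnnQuot A Y) (I ⧸ LinearMap.range f) := by
    refine (Module.Baer.of_forall_exists_comp_eq g fun L φ => ?_).injective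
    have hL := hY _ (AnnQuot.isCogBy_restrictScalars Y (ι := ι ∘ₗ L.subtype)
      (hι.comp L.subtype_injective))
    -- restricting scalars of the `B`-module `Y` gives back the `A`-module `Y` definitionally
    obtain ⟨ψ, hψ⟩ := hS.exists_comp_g_eq_of_isZero_ext_restrictScalars
      (RingCon.mk'_surjective _) (@ModuleCat.isZero_of_subsingleton _ _ _ hL) (ModuleCat.ofHom φ)
    exact ⟨ψ.hom, congrArg ModuleCat.Hom.hom hψ⟩
  exact exists_ulift_of_injective_of_exact hI hC hf hfg hg

/-- If `Y` is a finitely generated module over an Artin algebra `A` which is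
Ext-injective in `cog(Y)`, then `Y` has injective dimension at most `1` over `A/ann_A(Y)`. -/
theorem stmt3
    (R : Type) [CommRing R] [IsArtinianRing R] [IsLocalRing R]
    (A : Type) [Ring A] [Algebra R A] [Module.Finite R A]
    (Y : Type) [AddCommGroup Y] [Module A Y] [Module.Finite A Y]
    (hY : ∀ (M : Type) [AddCommGroup M] [Module A M], IsCogBy A Y M →
      Subsingleton (ext1 A M Y)) :
    ∃ (I0 I1 : ModuleCat (AnnQuot A Y)) (f : Y →ₗ[AnnQuot A Y] I0)
      (g : I0 →ₗ[AnnQuot A Y] I1),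
      Module.Injective (AnnQuot A Y) I0 ∧ Module.Injective (AnnQuot A Y) I1 ∧
      Function.Injective f ∧ Function.Exact f g ∧ Function.Surjective g :=
  stmt3_general R A Y hY
end

section
/- Let A be an Artin algebra, T• a two-term tilting complex over A given by α : T⁻¹ → T⁰, and B = End_{K(Mod-A)}(T•). Let θ : B → End_A(H⁰(T•)) be the ring homomorphism sending the homotopy class of a chain map φ to the induced endomorphism H⁰(φ) of H⁰(T•) = Coker α. Then θ is surjective and its kernel equals 𝔟 = {φ ∈ B : φ ∘ σ = 0 in K(Mod-A) for every σ ∈ Hom_{K(Mod-A)}(A, T•)}, the annihilator of the left B-module Hom_{K(Mod-A)}(A, T•); consequently θ induces a ring isomorphism B/𝔟 ≅ End_A(H⁰(T•)). -/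
open CategoryTheory

section Complexes

open CategoryTheory Limits

variable (A : Type) [Ring A]

/-- The homotopy category `K(Mod-A)` of cochain complexes of `A`-modules. -/
abbrev HtpyCat := HomotopyCategory (ModuleCat.{0} A) (ComplexShape.up ℤ)

/-- A cochain complex viewed as an object of the homotopy category. -/
noncomputable abbrev toK (T : CochainComplex (ModuleCat.{0} A) ℤ) : HtpyCat A :=
  (HomotopyCategory.quotient (ModuleCat.{0} A) (ComplexShape.up ℤ)).obj T

/-- An `A`-module viewed as a complex concentrated in degree `0`, in the homotopy category. -/
noncomputable abbrev sgl (M : Type) [AddCommGroup M] [Module A M] : HtpyCat A :=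
  toK A ((HomologicalComplex.single (ModuleCat.{0} A) (ComplexShape.up ℤ) 0).obj (ModuleCat.of A M))

/-- `T` is a two-term complex, concentrated in degrees `-1` and `0`. -/
def IsTwoTerm (T : CochainComplex (ModuleCat.{0} A) ℤ) : Prop :=
  ∀ i : ℤ, i ≠ -1 → i ≠ 0 → IsZero (T.X i)

/-- `T` is a bounded complex of finitely generated projective `A`-modules. -/
def IsBddFgProj (T : CochainComplex (ModuleCat.{0} A) ℤ) : Prop :=
  (∃ a b : ℤ, ∀ i : ℤ, (i < a ∨ b < i) → IsZero (T.X i)) ∧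
  (∀ i : ℤ, Module.Projective A (T.X i)) ∧ ∀ i : ℤ, Module.Finite A (T.X i)

/-- `T` is a tilting complex: it is a bounded complex of finitely generated projective
modules, self-orthogonal in nonzero degrees, and it generates `K^b(proj A)`. -/
def IsTiltingComplex (T : CochainComplex (ModuleCat.{0} A) ℤ) : Prop :=
  IsBddFgProj A T ∧
  (∀ i : ℤ, i ≠ 0 → ∀ f : toK A T ⟶ (toK A T)⟦i⟧, f = 0) ∧
  ∀ M : CochainComplex (ModuleCat.{0} A) ℤ, IsBddFgProj A M →
    (∀ i : ℤ, ∀ f : (toK A T)⟦i⟧ ⟶ toK A M, f = 0) → IsZero (toK A M)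

/-- `T` is a two-term tilting complex. -/
def IsTwoTermTilting (T : CochainComplex (ModuleCat.{0} A) ℤ) : Prop :=
  IsTwoTerm A T ∧ IsTiltingComplex A T

/-- The `0`-th homology `H⁰(T) = Coker (d : T⁻¹ → T⁰)` of a two-term complex. -/
def H0 (T : CochainComplex (ModuleCat.{0} A) ℤ) : Type :=
  T.X 0 ⧸ LinearMap.range (T.d (-1) 0).hom

noncomputable instance (T : CochainComplex (ModuleCat.{0} A) ℤ) : AddCommGroup (H0 A T) :=
  inferInstanceAs (AddCommGroup (T.X 0 ⧸ LinearMap.range (T.d (-1) 0).hom))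

noncomputable instance (T : CochainComplex (ModuleCat.{0} A) ℤ) : Module A (H0 A T) :=
  inferInstanceAs (Module A (T.X 0 ⧸ LinearMap.range (T.d (-1) 0).hom))

end Complexes

section Theta

open CategoryTheory Limits

variable (A : Type) [Ring A]

/-- The ring homomorphism `End_{K(Mod A)}(T) → End_A(Hⁱ(T))` induced by the homology functor. -/
noncomputable def thetaH (T : CochainComplex (ModuleCat.{0} A) ℤ) (i : ℤ) :
    End (toK A T) →+*
      End ((HomotopyCategory.homologyFunctor (ModuleCat.{0} A) (ComplexShape.up ℤ) i).obj
        (toK A T)) where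
  toFun φ := (HomotopyCategory.homologyFunctor (ModuleCat.{0} A) (ComplexShape.up ℤ) i).map φ
  map_one' := (HomotopyCategory.homologyFunctor (ModuleCat.{0} A) (ComplexShape.up ℤ) i).map_id _
  map_mul' φ ψ :=
    (HomotopyCategory.homologyFunctor (ModuleCat.{0} A) (ComplexShape.up ℤ) i).map_comp ψ φ
  map_zero' := (HomotopyCategory.homologyFunctor (ModuleCat.{0} A) (ComplexShape.up ℤ) i).map_zero _ _
  map_add' _ _ := Functor.map_add _

end Theta

section BCon

open CategoryTheory Limits

variable (A : Type) [Ring A]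

/-- The congruence on `B = End_{K(Mod A)}(T)` modulo the annihilator `𝔟` of the left
`B`-module `Hom_{K(Mod A)}(A, T)`. -/
noncomputable def bCon (T : CochainComplex (ModuleCat.{0} A) ℤ) :
    RingCon (End (toK A T)) where
  r φ ψ := ∀ σ : sgl A A ⟶ toK A T, σ ≫ φ = σ ≫ ψ
  iseqv := ⟨fun _ _ => rfl, fun h σ => (h σ).symm, fun h1 h2 σ => (h1 σ).trans (h2 σ)⟩
  mul' := @fun φ ψ φ' ψ' h1 h2 σ => by
    rw [End.mul_def, End.mul_def, ← Category.assoc, ← Category.assoc, h2 σ, h1 (σ ≫ ψ')]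
  add' := @fun φ ψ φ' ψ' h1 h2 σ => by
    rw [Preadditive.comp_add, Preadditive.comp_add, h1 σ, h2 σ]

end BCon

/-!
Since `T` is concentrated in degrees `-1` and `0`, `H⁰(T)` is the cokernel of `d : T⁻¹ → T⁰`.
A chain map from the stalk complex `A[0]` to `T` is just an element `x ∈ T⁰`, and its composite
with an endomorphism `f` is null-homotopic iff `f⁰ x ∈ im d` (a homotopy is a preimage under `d`).
So both `θ f = 0` and `f ∈ 𝔟` say that `f⁰` maps `T⁰` into `im d`. For surjectivity, an
endomorphism of `Coker d` lifts to `f⁰ : T⁰ → T⁰` because `T⁰` is projective, and `f⁰ ∘ d` lifts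
through `d` because `T⁻¹` is projective.
-/

section TwoTermComplexes

open CategoryTheory Limits HomologicalComplex

variable {A : Type} [Ring A]

lemma IsTwoTerm.d_zero_one {T : CochainComplex (ModuleCat.{0} A) ℤ} (hT : IsTwoTerm A T) :
    T.d 0 1 = 0 :=
  (hT 1 (by norm_num) (by norm_num)).eq_of_tgt _ _

namespace IsTwoTerm

variable {T T' : CochainComplex (ModuleCat.{0} A) ℤ}

noncomputable def homMk (hT : IsTwoTerm A T) (hT' : IsTwoTerm A T')
    (fm : T.X (-1) ⟶ T'.X (-1)) (f0 : T.X 0 ⟶ T'.X 0)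
    (comm : fm ≫ T'.d (-1) 0 = T.d (-1) 0 ≫ f0) : T ⟶ T' where
  f i :=
    if h₀ : i = 0 then (T.XIsoOfEq h₀).hom ≫ f0 ≫ (T'.XIsoOfEq h₀).inv
    else if h₁ : i = -1 then (T.XIsoOfEq h₁).hom ≫ fm ≫ (T'.XIsoOfEq h₁).inv
    else 0
  comm' i j (hij : i + 1 = j) := by
    by_cases h₀ : i = 0
    · exact (hT' j (by omega) (by omega)).eq_of_tgt _ _
    by_cases h₁ : i = -1
    · obtain rfl := h₁
      obtain rfl : j = 0 := by omega
      simpa using comm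
    · exact (hT i h₁ h₀).eq_of_src _ _

@[simp]
lemma homMk_f_zero (hT : IsTwoTerm A T) (hT' : IsTwoTerm A T')
    (fm : T.X (-1) ⟶ T'.X (-1)) (f0 : T.X 0 ⟶ T'.X 0)
    (comm : fm ≫ T'.d (-1) 0 = T.d (-1) 0 ≫ f0) : (homMk hT hT' fm f0 comm).f 0 = f0 := by
  simp [homMk]

end IsTwoTerm

lemma ModuleCat.exists_comp_eq_of_range_le {P X Y : ModuleCat.{0} A} [Module.Projective A P]
    (w : X ⟶ Y) (v : P ⟶ Y) (h : LinearMap.range v.hom ≤ LinearMap.range w.hom) :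
    ∃ u : P ⟶ X, u ≫ w = v := by
  obtain ⟨u, hu⟩ := Module.projective_lifting_property w.hom.rangeRestrict
    (v.hom.codRestrict _ fun p => h ⟨p, rfl⟩) w.hom.surjective_rangeRestrict
  exact ⟨ModuleCat.ofHom u, ModuleCat.hom_ext <| LinearMap.ext fun p =>
    congrArg Subtype.val (LinearMap.congr_fun hu p)⟩

namespace CochainComplex

variable (T : CochainComplex (ModuleCat.{0} A) ℤ)

noncomputable def homologyProj (hd : T.d 0 1 = 0) : T.X 0 ⟶ T.homology 0 :=
  T.pOpcycles 0 ≫ (T.isoHomologyι 0 1 (by simp) hd).inv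

instance (hd : T.d 0 1 = 0) : Epi (T.homologyProj hd) := by
  unfold homologyProj; infer_instance

lemma homologyProj_eq_zero_iff (hd : T.d 0 1 = 0) (x : T.X 0) :
    T.homologyProj hd x = 0 ↔ x ∈ LinearMap.range (T.d (-1) 0).hom := by
  have hexact := (ShortComplex.mk _ _ (T.d_pOpcycles (-1) 0)).exact_of_g_is_cokernel
    (T.opcyclesIsCokernel (-1) 0 (by simp))
  rw [hexact.moduleCat_range_eq_ker, LinearMap.mem_ker, homologyProj, ModuleCat.comp_apply]
  exact (T.isoHomologyι 0 1 (by simp) hd).toLinearEquiv.symm.map_eq_zero_iff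

variable {T} {T' : CochainComplex (ModuleCat.{0} A) ℤ}

lemma f_homologyProj (hd : T.d 0 1 = 0) (hd' : T'.d 0 1 = 0) (f : T ⟶ T') :
    f.f 0 ≫ T'.homologyProj hd' = T.homologyProj hd ≫ homologyMap f 0 := by
  simp [homologyProj, ← cancel_mono (T'.homologyι 0)]

lemma homologyMap_eq_zero_iff (hd : T.d 0 1 = 0) (hd' : T'.d 0 1 = 0) (f : T ⟶ T') :
    homologyMap f 0 = 0 ↔ ∀ x, f.f 0 x ∈ LinearMap.range (T'.d (-1) 0).hom := by
  simp_rw [← homologyProj_eq_zero_iff T' hd', ← ModuleCat.comp_apply, f_homologyProj hd hd',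
    ← cancel_epi (T.homologyProj hd), comp_zero]
  constructor
  · intro h x; rw [h]; rfl
  · intro h; ext x; exact h x

lemma rel_neg_one_zero : (ComplexShape.up ℤ).Rel (-1) 0 := by simp

lemma rel_zero_one : (ComplexShape.up ℤ).Rel 0 1 := by simp

lemma quotient_map_fromSingle_eq_zero_iff {P : ModuleCat.{0} A} [Module.Projective A P]
    (g : (single (ModuleCat.{0} A) (ComplexShape.up ℤ) 0).obj P ⟶ T) :
    (HomotopyCategory.quotient _ _).map g = 0 ↔
      ∀ p, g.f 0 p ∈ LinearMap.range (T.d (-1) 0).hom := by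
  constructor
  · intro hg p
    have H : Homotopy g 0 := HomotopyCategory.homotopyOfEq _ _ (by rw [hg, Functor.map_zero])
    have h0 := H.comm 0
    rw [dNext_eq H.hom rel_zero_one, prevD_eq H.hom rel_neg_one_zero, single_obj_d,
      zero_comp, zero_add, zero_f, add_zero] at h0
    exact ⟨H.hom 0 (-1) p, by rw [h0]; rfl⟩
  · intro hg
    obtain ⟨u, hu⟩ := ModuleCat.exists_comp_eq_of_range_le (T.d (-1) 0)
      ((singleObjXSelf (ComplexShape.up ℤ) 0 P).inv ≫ g.f 0) (by
        rintro _ ⟨p, rfl⟩; exact hg _)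
    let h : ∀ i j : ℤ, (ComplexShape.up ℤ).Rel j i →
        (((single (ModuleCat.{0} A) (ComplexShape.up ℤ) 0).obj P).X i ⟶ T.X j) :=
      fun i j hji => if hi : i = 0 then
        (singleObjXIsoOfEq (ComplexShape.up ℤ) 0 P i hi).hom ≫ u ≫
          (T.XIsoOfEq (show -1 = j by change j + 1 = i at hji; omega)).hom
      else 0
    have hgh : g = Homotopy.nullHomotopicMap' h := by
      ext1
      rw [Homotopy.nullHomotopicMap'_f rel_neg_one_zero rel_zero_one, single_obj_d, zero_comp,
        zero_add]
      simp [h, hu, singleObjXSelf]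
    rw [hgh, HomotopyCategory.eq_of_homotopy _ _ (Homotopy.nullHomotopy' h), Functor.map_zero]

lemma exists_fromSingle_f_apply_eq (hd : T.d 0 1 = 0) (x : T.X 0) :
    ∃ (s : (single (ModuleCat.{0} A) (ComplexShape.up ℤ) 0).obj (ModuleCat.of A A) ⟶ T) (a : _),
      s.f 0 a = x := by
  refine ⟨mkHomFromSingle (ModuleCat.ofHom (LinearMap.toSpanSingleton A _ x)) ?_,
    (singleObjXSelf (ComplexShape.up ℤ) 0 (ModuleCat.of A A)).inv 1, ?_⟩
  · rintro _ rfl; simp [hd]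
  · simp

lemma forall_quotient_map_comp_eq_zero_iff (hd : T.d 0 1 = 0) (f : T ⟶ T') :
    (∀ s : (single (ModuleCat.{0} A) (ComplexShape.up ℤ) 0).obj (ModuleCat.of A A) ⟶ T,
      (HomotopyCategory.quotient _ _).map (s ≫ f) = 0) ↔
      ∀ x, f.f 0 x ∈ LinearMap.range (T'.d (-1) 0).hom := by
  simp_rw [quotient_map_fromSingle_eq_zero_iff, comp_f, ModuleCat.comp_apply]
  refine ⟨fun h x => ?_, fun h s p => h _⟩
  obtain ⟨s, a, rfl⟩ := exists_fromSingle_f_apply_eq hd x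
  exact h s a

lemma exists_homologyMap_eq (hT : IsTwoTerm A T) (hT' : IsTwoTerm A T')
    [Module.Projective A (T.X (-1))] [Module.Projective A (T.X 0)]
    (g : T.homology 0 ⟶ T'.homology 0) : ∃ f : T ⟶ T', homologyMap f 0 = g := by
  set q := T.homologyProj hT.d_zero_one
  set q' := T'.homologyProj hT'.d_zero_one
  obtain ⟨f0, hf0⟩ : ∃ f0, f0 ≫ q' = q ≫ g := ⟨_, Projective.factorThru_comp (q ≫ g) q'⟩
  obtain ⟨fm, hfm⟩ := ModuleCat.exists_comp_eq_of_range_le (T'.d (-1) 0) (T.d (-1) 0 ≫ f0) (by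
    rintro _ ⟨y, rfl⟩
    rw [← homologyProj_eq_zero_iff T' hT'.d_zero_one, ← ModuleCat.comp_apply, Category.assoc, hf0]
    simp [q, homologyProj])
  refine ⟨hT.homMk hT' fm f0 hfm, ?_⟩
  rw [← cancel_epi q, ← f_homologyProj _ hT'.d_zero_one, IsTwoTerm.homMk_f_zero, hf0]

end CochainComplex

noncomputable def homologyIsoOfHomotopyCategory (T : CochainComplex (ModuleCat.{0} A) ℤ) (i : ℤ) :
    (HomotopyCategory.homologyFunctor _ _ i).obj (toK A T) ≅ T.homology i :=
  (HomotopyCategory.homologyFunctorFactors _ _ i).app T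

variable {T : CochainComplex (ModuleCat.{0} A) ℤ}

lemma thetaH_quotient_map (i : ℤ) (f : T ⟶ T) :
    thetaH A T i ((HomotopyCategory.quotient _ _).map f) =
      (homologyIsoOfHomotopyCategory T i).hom ≫ homologyMap f i ≫
        (homologyIsoOfHomotopyCategory T i).inv := by
  rw [← Category.assoc, Iso.eq_comp_inv]
  exact (HomotopyCategory.homologyFunctorFactors _ _ i).hom.naturality f

lemma thetaH_zero_eq_zero_iff (hd : T.d 0 1 = 0) (φ : End (toK A T)) :
    thetaH A T 0 φ = 0 ↔ ∀ σ : sgl A A ⟶ toK A T, σ ≫ φ = 0 := by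
  obtain ⟨f, rfl⟩ := (HomotopyCategory.quotient _ _).map_surjective φ
  rw [thetaH_quotient_map, Preadditive.IsIso.comp_left_eq_zero,
    Preadditive.IsIso.comp_right_eq_zero, CochainComplex.homologyMap_eq_zero_iff hd hd,
    ← CochainComplex.forall_quotient_map_comp_eq_zero_iff hd,
    (HomotopyCategory.quotient _ _).map_surjective.forall]
  simp only [Functor.map_comp]

lemma thetaH_zero_surjective (hT : IsTwoTerm A T)
    [Module.Projective A (T.X (-1))] [Module.Projective A (T.X 0)] :
    Function.Surjective (thetaH A T 0) := by
  intro g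
  obtain ⟨f, hf⟩ := CochainComplex.exists_homologyMap_eq hT hT
    ((homologyIsoOfHomotopyCategory T 0).inv ≫ g ≫ (homologyIsoOfHomotopyCategory T 0).hom)
  exact ⟨(HomotopyCategory.quotient _ _).map f, by simp [thetaH_quotient_map, hf]⟩

lemma bCon_eq_ker_thetaH (hd : T.d 0 1 = 0) : bCon A T = RingCon.ker (thetaH A T 0) := by
  ext φ ψ
  rw [RingCon.ker_apply, ← sub_eq_zero, ← map_sub, thetaH_zero_eq_zero_iff hd]
  exact forall_congr' fun σ => (sub_eq_zero.symm.trans (by rw [Preadditive.comp_sub]))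

end TwoTermComplexes

theorem stmt10_general
    (A : Type) [Ring A]
    (T : CochainComplex (ModuleCat.{0} A) ℤ) (hT : IsTwoTermTilting A T) :
    Function.Surjective (thetaH A T 0) ∧
    (∀ φ : CategoryTheory.End (toK A T),
      thetaH A T 0 φ = 0 ↔ ∀ σ : sgl A A ⟶ toK A T, σ ≫ φ = 0) ∧
    ∃ e : (bCon A T).Quotient ≃+*
        CategoryTheory.End ((HomotopyCategory.homologyFunctor (ModuleCat.{0} A)
          (ComplexShape.up ℤ) 0).obj (toK A T)),
      ∀ φ : CategoryTheory.End (toK A T), e (φ : (bCon A T).Quotient) = thetaH A T 0 φ := by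
  obtain ⟨hT₂, ⟨-, hproj, -⟩, -⟩ := hT
  have hd := hT₂.d_zero_one
  have := hproj (-1)
  have := hproj 0
  have hsurj := thetaH_zero_surjective hT₂
  have hker := bCon_eq_ker_thetaH hd
  exact ⟨hsurj, thetaH_zero_eq_zero_iff hd,
    RingEquiv.ofBijective ((bCon A T).lift _ hker.le) (RingCon.lift_bijective_iff.2 ⟨hker, hsurj⟩),
    fun _ => rfl⟩

/-- For a two-term tilting complex `T` over an Artin algebra `A`, the
canonical ring homomorphism `θ : B = End_{K(Mod A)}(T) → End_A(H⁰(T))` is surjective with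
kernel the annihilator `𝔟` of `Hom_{K(Mod A)}(A, T)`, and hence induces a ring isomorphism
`B/𝔟 ≅ End_A(H⁰(T))`. -/
theorem stmt10
    (R : Type) [CommRing R] [IsArtinianRing R] [IsLocalRing R]
    (A : Type) [Ring A] [Algebra R A] [Module.Finite R A]
    (T : CochainComplex (ModuleCat.{0} A) ℤ) (hT : IsTwoTermTilting A T) :
    Function.Surjective (thetaH A T 0) ∧
    (∀ φ : CategoryTheory.End (toK A T),
      thetaH A T 0 φ = 0 ↔ ∀ σ : sgl A A ⟶ toK A T, σ ≫ φ = 0) ∧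
    ∃ e : (bCon A T).Quotient ≃+*
        CategoryTheory.End ((HomotopyCategory.homologyFunctor (ModuleCat.{0} A)
          (ComplexShape.up ℤ) 0).obj (toK A T)),
      ∀ φ : CategoryTheory.End (toK A T), e (φ : (bCon A T).Quotient) = thetaH A T 0 φ :=
  stmt10_general A T hT
end

section
/- Let A be an Artin algebra and X a finitely generated right A-module which is faithful (ann_A(X) = 0) and Ext-projective in gen(X). Then there exist d ≥ 1 and an injective A-homomorphism f : A → X^(d) such that the induced map Hom_A(X^(d), N) → Hom_A(A, N), g ↦ g ∘ f, is surjective for every N in gen(X); in particular Ext¹_A(Coker f, N) = 0 for every N in gen(X), so Coker f is Ext-projective in gen(X). -/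
open CategoryTheory

/-!
Choose generators `x₁, …, x_d` of `X` over `R` (with `d ≥ 1`) and let `f a = (a x₁, …, a x_d)`.
Since `R` acts centrally, every `x ∈ X` is `g (x₁, …, x_d)` for an `A`-linear
`g = ∑ rᵢ prᵢ`, so every map `A → N` with `N ∈ gen(X)` factors through `f`; faithfulness of `X`
makes `f` injective.

For the `Ext` statement, `Ext¹(M, N) = 0` means that for one (equivalently, every) projective
presentation `P ↠ M`, every map `ker → N` extends to `P`. Present `Coker f` by
`Q ↠ X^d ↠ Coker f`: a map on its kernel is first corrected on `ker (Q ↠ X^d)` using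
`Ext¹(X^d, N) = 0`, and what remains factors through `range f`, where it extends to `X^d`.
-/

open LinearMap (ker range)

section HomExtends

variable {A : Type*} [Ring A]

def Submodule.HomExtends {M : Type*} [AddCommGroup M] [Module A M] (L : Submodule A M)
    (N : Type*) [AddCommGroup N] [Module A N] : Prop :=
  ∀ φ : L →ₗ[A] N, ∃ ψ : M →ₗ[A] N, ψ ∘ₗ L.subtype = φ

variable {M M' P P' N : Type*} [AddCommGroup M] [Module A M] [AddCommGroup M'] [Module A M']
  [AddCommGroup P] [Module A P] [AddCommGroup P'] [Module A P'] [AddCommGroup N] [Module A N]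

lemma LinearMap.exists_comp_eq_of_ker_le {f : M →ₗ[A] M'} (hf : Function.Surjective f)
    {g : M →ₗ[A] N} (h : ker f ≤ ker g) : ∃ g' : M' →ₗ[A] N, g' ∘ₗ f = g :=
  ⟨(ker f).liftQ g h ∘ₗ (f.quotKerEquivOfSurjective hf).symm.toLinearMap, by
    ext x; simp [LinearMap.quotKerEquivOfSurjective_symm_apply]⟩

lemma Submodule.homExtends_range_iff (d : P →ₗ[A] M) :
    (range d).HomExtends N ↔
      ∀ φ : P →ₗ[A] N, ker d ≤ ker φ → ∃ ψ : M →ₗ[A] N, ψ ∘ₗ d = φ := by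
  constructor
  · intro h φ hφ
    obtain ⟨φ', rfl⟩ := LinearMap.exists_comp_eq_of_ker_le (g := φ) d.surjective_rangeRestrict
      (by rwa [LinearMap.ker_rangeRestrict])
    obtain ⟨ψ, rfl⟩ := h φ'
    exact ⟨ψ, rfl⟩
  · intro h φ
    obtain ⟨ψ, hψ⟩ := h (φ ∘ₗ d.rangeRestrict) fun x hx => by
      simp [show d.rangeRestrict x = 0 from Subtype.ext hx]
    refine ⟨ψ, ?_⟩
    ext ⟨_, x, rfl⟩
    exact LinearMap.congr_fun hψ x

lemma Submodule.HomExtends.ker_of_projective {π : P →ₗ[A] M} {π' : P' →ₗ[A] M}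
    [Module.Projective A P] [Module.Projective A P']
    (hπ : Function.Surjective π) (hπ' : Function.Surjective π')
    (h : (ker π).HomExtends N) : (ker π').HomExtends N := by
  obtain ⟨α, hα⟩ := Module.projective_lifting_property π' π hπ'
  obtain ⟨β, hβ⟩ := Module.projective_lifting_property π π' hπ
  have hαβ (u : P') : π' (u - α (β u)) = 0 := by
    rw [map_sub, ← LinearMap.comp_apply π' α, hα, ← LinearMap.comp_apply π β, hβ, sub_self]
  intro φ
  obtain ⟨ψ₀, hψ₀⟩ := h (φ ∘ₗ α.restrict fun u (hu : π u = 0) => by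
    rwa [LinearMap.mem_ker, ← LinearMap.comp_apply, hα])
  refine ⟨φ ∘ₗ (LinearMap.id - α ∘ₗ β).codRestrict _ hαβ + ψ₀ ∘ₗ β, ?_⟩
  ext ⟨u, hu⟩
  have hβu : π (β u) = 0 := by rwa [← LinearMap.comp_apply, hβ]
  calc φ ⟨u - α (β u), _⟩ + ψ₀ (β u)
      = φ ⟨u - α (β u), hαβ u⟩ + φ ⟨α (β u), _⟩ :=
        congrArg _ (LinearMap.congr_fun hψ₀ ⟨β u, hβu⟩)
    _ = φ ⟨u, hu⟩ := by rw [← map_add]; congr 1; ext; exact sub_add_cancel u (α (β u))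

lemma Submodule.HomExtends.ker_piMap {ι : Type*} [Fintype ι] {P M : ι → Type*}
    [∀ i, AddCommGroup (P i)] [∀ i, Module A (P i)] [∀ i, AddCommGroup (M i)]
    [∀ i, Module A (M i)] (π : ∀ i, P i →ₗ[A] M i) (h : ∀ i, (ker (π i)).HomExtends N) :
    (ker (LinearMap.piMap π)).HomExtends N := by
  classical
  have hker (u) : u ∈ ker (LinearMap.piMap π) ↔ ∀ i, u i ∈ ker (π i) := by
    simp [funext_iff]
  have hsingle (i) (k : P i) (hk : k ∈ ker (π i)) : Pi.single i k ∈ ker (LinearMap.piMap π) := by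
    rw [hker]
    intro j
    rcases eq_or_ne j i with rfl | hji
    · simpa using hk
    · simp [hji]
  intro φ
  choose ψ hψ using fun i => h i (φ ∘ₗ (LinearMap.single A P i).restrict (hsingle i))
  refine ⟨∑ i, ψ i ∘ₗ LinearMap.proj i, ?_⟩
  ext ⟨u, hu⟩
  have hu' := (hker u).1 hu
  calc (∑ i, ψ i ∘ₗ LinearMap.proj i) u
      = ∑ i, φ ⟨Pi.single i (u i), hsingle i _ (hu' i)⟩ := by
        simp only [LinearMap.coe_sum, Finset.sum_apply, LinearMap.coe_comp,
          Function.comp_apply, LinearMap.coe_proj, Function.eval]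
        exact Finset.sum_congr rfl fun i _ => LinearMap.congr_fun (hψ i) ⟨u i, hu' i⟩
    _ = φ ⟨u, hu⟩ := by
        rw [← map_sum]
        congr 1
        ext1
        simp [Finset.univ_sum_single]

lemma Submodule.HomExtends.comap {π : P →ₗ[A] M} (hπ : Function.Surjective π)
    {L : Submodule A M} (hK : (ker π).HomExtends N) (hL : L.HomExtends N) :
    (L.comap π).HomExtends N := by
  intro φ
  have hle : ker π ≤ L.comap π := fun u (hu : π u = 0) => by
    simp [Submodule.mem_comap, hu]
  obtain ⟨ψ₀, hψ₀⟩ := hK (φ ∘ₗ Submodule.inclusion hle)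
  let τ : L.comap π →ₗ[A] L := π.restrict fun _ hu => hu
  have hτ : Function.Surjective τ := by
    rintro ⟨m, hm⟩
    obtain ⟨u, rfl⟩ := hπ m
    exact ⟨⟨u, hm⟩, rfl⟩
  -- `φ` and `ψ₀` agree on `ker π`, so `φ - ψ₀` only depends on `π u ∈ L`
  obtain ⟨χ, hχ⟩ := LinearMap.exists_comp_eq_of_ker_le hτ
    (g := φ - ψ₀ ∘ₗ (L.comap π).subtype) fun u (hu : τ u = 0) => by
      have hu' : (u : P) ∈ ker π := congrArg Subtype.val hu
      rw [LinearMap.mem_ker, LinearMap.sub_apply, sub_eq_zero]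
      exact (LinearMap.congr_fun hψ₀ ⟨u, hu'⟩).symm
  obtain ⟨G, hG⟩ := hL χ
  refine ⟨ψ₀ + G ∘ₗ π, ?_⟩
  ext u
  calc ψ₀ u + G (π u) = ψ₀ u + χ (τ u) := congrArg (ψ₀ u + ·) (LinearMap.congr_fun hG (τ u))
    _ = φ u := by rw [← LinearMap.comp_apply χ, hχ]; simp

end HomExtends

section Ext

variable {A : Type} [Ring A] {M N : Type} [AddCommGroup M] [Module A M]
  [AddCommGroup N] [Module A N]

lemma ext1_subsingleton_iff_homExtends_range (P : ProjectiveResolution (ModuleCat.of A M)) :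
    Subsingleton (ext1 A M N) ↔ (range (P.complex.d 1 0).hom).HomExtends N := by
  let K := P.complex.linearYonedaObj ℤ (ModuleCat.of A N)
  have hd (i j : ℕ) (φ : P.complex.X i ⟶ ModuleCat.of A N) :
      K.d i j φ = P.complex.d j i ≫ φ :=
    (ConcreteCategory.congr_hom (ChainComplex.linearYonedaObj_d P.complex ℤ _ i j) φ).trans
      (Linear.leftComp_apply _ _ _ _)
  have hexact : range (P.complex.d 2 1).hom = ker (P.complex.d 1 0).hom :=
    (ShortComplex.moduleCat_exact_iff_range_eq_ker _).1 (P.exact_succ 0)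
  rw [Equiv.subsingleton_congr ((forget _).mapIso (P.isoExt 1 _)).toEquiv,
    ← ModuleCat.isZero_iff_subsingleton, ← HomologicalComplex.exactAt_iff_isZero_homology,
    K.exactAt_iff' 0 1 2 (by simp) (by simp), ShortComplex.moduleCat_exact_iff,
    Submodule.homExtends_range_iff, ← hexact]
  simp only [HomologicalComplex.shortComplexFunctor'_obj_f,
    HomologicalComplex.shortComplexFunctor'_obj_g, LinearMap.range_le_ker_iff]
  refine ModuleCat.homEquiv.forall_congr fun φ => imp_congr ?_ ?_
  · exact (Eq.congr_left (hd 1 2 φ)).trans ModuleCat.hom_ext_iff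
  · refine ModuleCat.homEquiv.exists_congr fun ψ => ?_
    exact (Eq.congr_left (hd 0 1 ψ)).trans ModuleCat.hom_ext_iff

lemma ext1_subsingleton_iff_homExtends_ker {P : Type} [AddCommGroup P] [Module A P]
    [Module.Projective A P] {π : P →ₗ[A] M} (hπ : Function.Surjective π) :
    Subsingleton (ext1 A M N) ↔ (ker π).HomExtends N := by
  obtain ⟨Q⟩ := HasProjectiveResolution.out (Z := ModuleCat.of A M)
  let π₀ : Q.complex.X 0 →ₗ[A] M := (Q.π.f 0).hom
  have hπ₀ : Function.Surjective π₀ := (ModuleCat.epi_iff_surjective _).1 inferInstance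
  have hker : range (Q.complex.d 1 0).hom = ker π₀ :=
    (ShortComplex.moduleCat_exact_iff_range_eq_ker _).1 Q.exact₀
  rw [ext1_subsingleton_iff_homExtends_range Q, hker]
  exact ⟨fun h => h.ker_of_projective hπ₀ hπ, fun h => h.ker_of_projective hπ hπ₀⟩

lemma ext1_subsingleton_pi {ι : Type} [Fintype ι] {X : ι → Type} [∀ i, AddCommGroup (X i)]
    [∀ i, Module A (X i)] (h : ∀ i, Subsingleton (ext1 A (X i) N)) :
    Subsingleton (ext1 A (∀ i, X i) N) := by
  let π (i : ι) : (X i →₀ A) →ₗ[A] X i := Finsupp.linearCombination A id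
  have hπ (i : ι) : Function.Surjective (π i) := Finsupp.linearCombination_id_surjective A (X i)
  rw [ext1_subsingleton_iff_homExtends_ker (π := LinearMap.piMap π) (.piMap hπ)]
  exact .ker_piMap π fun i => (ext1_subsingleton_iff_homExtends_ker (hπ i)).1 (h i)

lemma ext1_subsingleton_quotient {L : Submodule A M} (hM : Subsingleton (ext1 A M N))
    (hL : L.HomExtends N) : Subsingleton (ext1 A (M ⧸ L) N) := by
  let π : (M →₀ A) →ₗ[A] M := Finsupp.linearCombination A id
  have hπ : Function.Surjective π := Finsupp.linearCombination_id_surjective A M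
  rw [ext1_subsingleton_iff_homExtends_ker (π := L.mkQ ∘ₗ π) (L.mkQ_surjective.comp hπ),
    LinearMap.ker_comp, Submodule.ker_mkQ]
  exact ((ext1_subsingleton_iff_homExtends_ker hπ).1 hM).comap hπ hL

end Ext

section Generators

variable {R A X : Type*} [CommRing R] [Ring A] [Algebra R A] [AddCommGroup X] [Module R X]
  [Module A X] [IsScalarTower R A X] {ι : Type*} {xs : ι → X}

lemma exists_linearMap_pi_apply_eq [Fintype ι] (hxs : Submodule.span R (Set.range xs) = ⊤)
    (x : X) : ∃ G : (ι → X) →ₗ[A] X, G xs = x := by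
  obtain ⟨c, rfl⟩ :=
    (Submodule.mem_span_range_iff_exists_fun R).1 (hxs ▸ Submodule.mem_top (x := x))
  exact ⟨∑ i, c i • LinearMap.proj i, by simp⟩

lemma injective_toSpanSingleton_of_faithful (hxs : Submodule.span R (Set.range xs) = ⊤)
    (hfaith : ∀ a : A, (∀ x : X, a • x = 0) → a = 0) :
    Function.Injective (LinearMap.toSpanSingleton A (ι → X) xs) := by
  refine (injective_iff_map_eq_zero _).2 fun a ha => hfaith a fun x => ?_
  have hle : Submodule.span R (Set.range xs) ≤ ker (DistribSMul.toLinearMap R X a) :=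
    Submodule.span_le.2 <| Set.range_subset_iff.2 fun i => congrFun ha i
  exact hle (hxs ▸ Submodule.mem_top)

end Generators

lemma IsGenBy.exists_linearMap_apply_eq {A : Type} [Ring A] {X N : Type} [AddCommGroup X]
    [Module A X] [AddCommGroup N] [Module A N] {ι : Type*} {xs : ι → X}
    (hxs : ∀ x : X, ∃ G : (ι → X) →ₗ[A] X, G xs = x) (hN : IsGenBy A X N) (n : N) :
    ∃ G : (ι → X) →ₗ[A] N, G xs = n := by
  obtain ⟨m, q, hq⟩ := hN
  obtain ⟨y, rfl⟩ := hq n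
  choose G hG using fun l => hxs (y l)
  exact ⟨q ∘ₗ LinearMap.pi G, congrArg q (funext hG)⟩

lemma LinearMap.surjective_comp_toSpanSingleton {A M N : Type*} [Ring A] [AddCommGroup M]
    [Module A M] [AddCommGroup N] [Module A N] {x : M}
    (h : ∀ n : N, ∃ G : M →ₗ[A] N, G x = n) :
    Function.Surjective fun G : M →ₗ[A] N => G ∘ₗ LinearMap.toSpanSingleton A M x := fun g => by
  obtain ⟨G, hG⟩ := h (g 1)
  exact ⟨G, LinearMap.ext_ring (by simpa using hG)⟩

theorem stmt17_general
    (R : Type) [CommRing R]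
    (A : Type) [Ring A] [Algebra R A] [Module.Finite R A]
    (X : Type) [AddCommGroup X] [Module A X] [Module.Finite A X]
    (hfaith : ∀ a : A, (∀ x : X, a • x = 0) → a = 0)
    (hX : ∀ (N : Type) [AddCommGroup N] [Module A N], IsGenBy A X N →
      Subsingleton (ext1 A X N)) :
    ∃ (d : ℕ) (f : A →ₗ[A] (Fin d → X)),
      1 ≤ d ∧ Function.Injective f ∧
      (∀ (N : Type) [AddCommGroup N] [Module A N], IsGenBy A X N →
        Function.Surjective (fun g : (Fin d → X) →ₗ[A] N => g ∘ₗ f)) ∧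
      (∀ (N : Type) [AddCommGroup N] [Module A N], IsGenBy A X N →
        Subsingleton (ext1 A ((Fin d → X) ⧸ LinearMap.range f) N)) := by
  let _ : Module R X := Module.compHom X (algebraMap R A)
  have : IsScalarTower R A X := ⟨fun r a x => by
    show (r • a) • x = algebraMap R A r • a • x
    rw [Algebra.smul_def, mul_smul]⟩
  have : Module.Finite R X := Module.Finite.trans A X
  obtain ⟨n, xs, hxs⟩ := Module.Finite.exists_fin (R := R) (M := X)
  -- a zero generator is added so that `d ≥ 1` even when `X = 0`
  let ys : Fin (n + 1) → X := Fin.cons 0 xs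
  have hys : Submodule.span R (Set.range ys) = ⊤ := by
    rw [Fin.range_cons, Submodule.span_insert_zero, hxs]
  let f := LinearMap.toSpanSingleton A (Fin (n + 1) → X) ys
  have hf (N : Type) [AddCommGroup N] [Module A N] (hN : IsGenBy A X N) :
      Function.Surjective fun g : (Fin (n + 1) → X) →ₗ[A] N => g ∘ₗ f :=
    LinearMap.surjective_comp_toSpanSingleton
      (hN.exists_linearMap_apply_eq (exists_linearMap_pi_apply_eq hys))
  refine ⟨n + 1, f, Nat.le_add_left 1 n, injective_toSpanSingleton_of_faithful hys hfaith, hf,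
    fun N _ _ hN => ?_⟩
  exact ext1_subsingleton_quotient (ext1_subsingleton_pi fun _ => hX N hN)
    ((Submodule.homExtends_range_iff f).2 fun φ _ => hf N hN φ)

/-- If `X` is a faithful finitely generated module over an Artin algebra
`A` which is Ext-projective in `gen(X)`, then there is an embedding `f : A → X^d` such that
`Hom(X^d, N) → Hom(A, N)` is onto for all `N ∈ gen(X)`; in particular `Coker f` is
Ext-projective in `gen(X)`. -/
theorem stmt17
    (R : Type) [CommRing R] [IsArtinianRing R] [IsLocalRing R]
    (A : Type) [Ring A] [Algebra R A] [Module.Finite R A]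
    (X : Type) [AddCommGroup X] [Module A X] [Module.Finite A X]
    (hfaith : ∀ a : A, (∀ x : X, a • x = 0) → a = 0)
    (hX : ∀ (N : Type) [AddCommGroup N] [Module A N], IsGenBy A X N →
      Subsingleton (ext1 A X N)) :
    ∃ (d : ℕ) (f : A →ₗ[A] (Fin d → X)),
      1 ≤ d ∧ Function.Injective f ∧
      (∀ (N : Type) [AddCommGroup N] [Module A N], IsGenBy A X N →
        Function.Surjective (fun g : (Fin d → X) →ₗ[A] N => g ∘ₗ f)) ∧
      (∀ (N : Type) [AddCommGroup N] [Module A N], IsGenBy A X N →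
        Subsingleton (ext1 A ((Fin d → X) ⧸ LinearMap.range f) N)) :=
  stmt17_general R A X hfaith hX
end
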